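/- arXiv:1106.4616 — 5 statements merged into one kernel-verified Lean document; each statement's English description precedes it below -/
import Mathlib

section
/- Define $N_3(k) = \sum (\lambda_2 - \lambda_1 + 1)(\lambda_1 - \lambda_0 + 1)$ over triples of integers $0 \le \lambda_0 \le \lambda_1 \le \lambda_2 \le 2k-1$ with $\lambda_0+\lambda_1+\lambda_2 = 3k-2$, plus correction terms $N_{(2,1)}(k) + N_{(2,1)}(k+1)$ as in the paper. Then the count of degree-3 stable equivariant sheaves satisfies $N_3(k) = k(k+1)^2(k+2)/6$. -/
/-- `N_{(1,1,1)}(k)`: the sum of `(λ₂-λ₁+1)(λ₁-λ₀+1)` over integer triples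
`0 ≤ λ₀ ≤ λ₁ ≤ λ₂ ≤ 2k-1` with `λ₀+λ₁+λ₂ = 3k-2`. -/
noncomputable def N111 (k : ℤ) : ℤ :=
  ∑ t ∈ (((Finset.Icc (0:ℤ) (2*k-1)) ×ˢ (Finset.Icc (0:ℤ) (2*k-1)) ×ˢ
      (Finset.Icc (0:ℤ) (2*k-1))).filter
      (fun t => t.1 ≤ t.2.1 ∧ t.2.1 ≤ t.2.2 ∧ t.1 + t.2.1 + t.2.2 = 3*k-2)),
    (t.2.2 - t.2.1 + 1) * (t.2.1 - t.1 + 1)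

/-- `N_{(2,1)}(k)` (valid for `k ≥ 1`):
`∑_{b=⌈-(k+1)/2⌉}^{-1} ⌊-(b+1)/2⌋ (k+2b+2)(k+2b+3)
  + ½ ∑_{a=0}^{⌊(k-3)/4⌋} (k-4a-2)(k-4a-1)`. -/
noncomputable def N21 (k : ℤ) : ℚ :=
  (∑ b ∈ Finset.Icc (-((k+1)/2)) (-1 : ℤ),
      ((((-(b+1))/2) * (k+2*b+2) * (k+2*b+3) : ℤ) : ℚ)) +
  (1/2) * ∑ a ∈ Finset.Icc (0 : ℤ) ((k-3)/4), (((k-4*a-2) * (k-4*a-1) : ℤ) : ℚ)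

/-!
On each parity class of `k`, both `N_{(1,1,1)}(k)` and `N_{(2,1)}(k)` are polynomials in `k`, so
the identity reduces to two polynomial identities. In `N_{(1,1,1)}` the triple is determined by
`(λ₀, λ₁)`; splitting the range of `λ₁` at `k` makes the bounds on `λ₀` linear, and the
resulting double sum is evaluated by telescoping explicit discrete antiderivatives. In `N_{(2,1)}`
the floor `⌊-(b+1)/2⌋` is removed by splitting the first sum according to the parity of `b`,
after which the same telescoping applies.
-/

open Finset

section IntervalSums

variable {M : Type*}

theorem sum_Icc_telescope [AddCommGroup M] (f F : ℤ → M) (hF : ∀ x, F x - F (x - 1) = f x)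
    {a b : ℤ} (hab : a - 1 ≤ b) : ∑ x ∈ Icc a b, f x = F b - F (a - 1) := by
  induction b, hab using Int.leInduction with
  | base => simp
  | succ n hn ih =>
    rw [← insert_Icc_right_eq_Icc_add_one (by omega), sum_insert (by simp), ih, ← hF,
      add_sub_cancel_right]
    abel

theorem sum_Icc_neg [AddCommMonoid M] (f : ℤ → M) (a b : ℤ) :
    ∑ x ∈ Icc a b, f x = ∑ x ∈ Icc (-b) (-a), f (-x) :=
  sum_nbij' (fun x => -x) (fun x => -x) (by intro x; simp only [mem_Icc]; omega)
    (by intro x; simp only [mem_Icc]; omega) (fun x _ => neg_neg x) (fun x _ => neg_neg x)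
    (fun x _ => by rw [neg_neg])

theorem sum_Icc_one_eq_sum_even_add_sum_odd [AddCommMonoid M] (f : ℤ → M) (n : ℤ) :
    ∑ x ∈ Icc 1 n, f x =
      ∑ t ∈ Icc 1 (n / 2), f (2 * t) + ∑ t ∈ Icc 0 ((n - 1) / 2), f (2 * t + 1) := by
  have hsplit :
      Icc 1 n = (Icc 1 (n / 2)).image (2 * ·) ∪ (Icc 0 ((n - 1) / 2)).image (2 * · + 1) := by
    ext x
    simp only [mem_Icc, mem_union, mem_image]
    constructor
    · intro hx
      rcases Int.emod_two_eq_zero_or_one x with h | h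
      · exact Or.inl ⟨x / 2, by omega, by omega⟩
      · exact Or.inr ⟨x / 2, by omega, by omega⟩
    · rintro (⟨t, ht, rfl⟩ | ⟨t, ht, rfl⟩) <;> omega
  rw [hsplit, sum_union, sum_image, sum_image]
  · intro x _ y _ h; simpa using h
  · intro x _ y _ h; simpa using h
  · rw [disjoint_left]
    simp only [mem_image]
    rintro _ ⟨s, -, rfl⟩ ⟨t, -, h⟩
    omega

end IntervalSums

theorem N111_eq_sum_sigma (k : ℤ) :
    N111 k = ∑ p ∈ (Icc (k / 2) ((3 * k - 2) / 2)).sigma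
        (fun l₁ => Icc (max 0 (k - 1 - l₁)) (min l₁ (3 * k - 2 - 2 * l₁))),
      (3 * k - 1 - p.2 - 2 * p.1) * (p.1 - p.2 + 1) := by
  rw [N111]
  refine sum_nbij' (fun t => ⟨t.2.1, t.1⟩) (fun p => (p.2, p.1, 3 * k - 2 - p.2 - p.1))
    ?_ ?_ ?_ (fun _ _ => rfl) ?_
  · rintro ⟨l₀, l₁, l₂⟩ ht
    simp only [mem_filter, mem_product, mem_Icc] at ht
    simp only [mem_sigma, mem_Icc, max_le_iff, le_min_iff]
    omega
  · rintro ⟨l₁, l₀⟩ hp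
    simp only [mem_sigma, mem_Icc, max_le_iff, le_min_iff] at hp
    simp only [mem_filter, mem_product, mem_Icc]
    omega
  · rintro ⟨l₀, l₁, l₂⟩ ht
    simp only [mem_filter, mem_product, mem_Icc] at ht
    simp only [Prod.mk.injEq, true_and]
    omega
  · rintro ⟨l₀, l₁, l₂⟩ ht
    simp only [mem_filter, mem_product, mem_Icc] at ht
    dsimp only
    congr 1
    omega

theorem N111_eq_sum_add_sum (k : ℤ) :
    N111 k =
      ∑ l₁ ∈ Icc (k / 2) (k - 1), ∑ l₀ ∈ Icc (k - 1 - l₁) l₁,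
          (3 * k - 1 - l₀ - 2 * l₁) * (l₁ - l₀ + 1)
      + ∑ l₁ ∈ Icc k ((3 * k - 2) / 2), ∑ l₀ ∈ Icc 0 (3 * k - 2 - 2 * l₁),
          (3 * k - 1 - l₀ - 2 * l₁) * (l₁ - l₀ + 1) := by
  have hsplit :
      Icc (k / 2) ((3 * k - 2) / 2) = Icc (k / 2) (k - 1) ∪ Icc k ((3 * k - 2) / 2) := by
    ext x; simp only [mem_Icc, mem_union]; omega
  have hdisj : Disjoint (Icc (k / 2) (k - 1)) (Icc k ((3 * k - 2) / 2)) := by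
    simp only [disjoint_left, mem_Icc]; omega
  rw [N111_eq_sum_sigma, sum_sigma, hsplit, sum_union hdisj]
  congr 1 <;> refine sum_congr rfl fun l₁ hl₁ => ?_ <;> simp only [mem_Icc] at hl₁
  · rw [max_eq_right (by omega), min_eq_left (by omega)]
  · rw [max_eq_left (by omega), min_eq_right (by omega)]

/- Discrete antiderivatives, `F x - F (x - 1) = f x`: the inner one for the summand of
`N111_eq_sum_add_sum` in `λ₀`, the other two for the two resulting sums in `λ₁`. -/
def n111InnerAntidiff (k l x : ℚ) : ℚ :=
  3*k*l*x - (3/2)*k*x^2 + (3/2)*k*x - 2*l^2*x + (1/2)*l*x^2 - (5/2)*l*x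
    + (1/3)*x^3 + (1/2)*x^2 - (5/6)*x

def n111LowerAntidiff (k l : ℚ) : ℚ :=
  (7/6)*k^3*l - (11/4)*k^2*l^2 - (35/4)*k^2*l + (8/3)*k*l^3 + (49/4)*k*l^2 + (209/12)*k*l
    - (5/6)*l^4 - (14/3)*l^3 - (26/3)*l^2 - (35/6)*l

def n111UpperAntidiff (k l : ℚ) : ℚ :=
  -(9/2)*k^3*l + (27/4)*k^2*l^2 + (63/4)*k^2*l - 4*k*l^3 - (51/4)*k*l^2 - (45/4)*k*l
    + (5/6)*l^4 + (10/3)*l^3 + (25/6)*l^2 + (5/3)*l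

theorem cast_N111_eq {k : ℤ} (hk : 0 ≤ k) :
    (N111 k : ℚ) =
      n111LowerAntidiff k (k - 1) - n111LowerAntidiff k ((k / 2 : ℤ) - 1)
      + (n111UpperAntidiff k ((3 * k - 2) / 2 : ℤ) - n111UpperAntidiff k (k - 1)) := by
  have inner (l₁ : ℤ) (a b : ℤ) (hab : a - 1 ≤ b) :
      ∑ l₀ ∈ Icc a b, (3 * (k : ℚ) - 1 - l₀ - 2 * l₁) * (l₁ - l₀ + 1) =
        n111InnerAntidiff k l₁ b - n111InnerAntidiff k l₁ (a - 1 : ℤ) :=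
    sum_Icc_telescope _ (fun x : ℤ => n111InnerAntidiff k l₁ x)
      (fun x => by simp only [n111InnerAntidiff]; push_cast; ring) hab
  rw [N111_eq_sum_add_sum]
  push_cast
  rw [sum_congr rfl fun l₁ hl₁ => inner l₁ _ _ (by simp only [mem_Icc] at hl₁; omega),
    sum_congr rfl fun l₁ hl₁ => inner l₁ _ _ (by simp only [mem_Icc] at hl₁; omega),
    sum_Icc_telescope _ (fun l : ℤ => n111LowerAntidiff k l)
      (fun x => by simp only [n111LowerAntidiff, n111InnerAntidiff]; push_cast; ring) (by omega),
    sum_Icc_telescope _ (fun l : ℤ => n111UpperAntidiff k l)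
      (fun x => by simp only [n111UpperAntidiff, n111InnerAntidiff]; push_cast; ring) (by omega)]
  push_cast
  ring

theorem cast_N111_of_even {k : ℤ} (hk : 0 ≤ k) (heven : Even k) :
    (N111 k : ℚ) = 7/48 * k^4 + 7/12 * k^3 + 19/24 * k^2 + 5/12 * k := by
  obtain ⟨m, rfl⟩ := heven
  rw [cast_N111_eq hk, show (m + m) / 2 = m by omega,
    show (3 * (m + m) - 2) / 2 = 3 * m - 1 by omega]
  simp only [n111LowerAntidiff, n111UpperAntidiff]
  push_cast
  ring

theorem cast_N111_of_odd {k : ℤ} (hk : 0 ≤ k) (hodd : Odd k) :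
    (N111 k : ℚ) = 7/48 * k^4 + 7/12 * k^3 + 19/24 * k^2 + 5/12 * k + 1/16 := by
  obtain ⟨m, rfl⟩ := hodd
  rw [cast_N111_eq hk, show (2 * m + 1) / 2 = m by omega,
    show (3 * (2 * m + 1) - 2) / 2 = 3 * m by omega]
  simp only [n111LowerAntidiff, n111UpperAntidiff]
  push_cast
  ring

theorem N21_eq_sum_add_sum_add_sum (k : ℤ) :
    N21 k =
      ∑ t ∈ Icc 1 ((k + 1) / 2 / 2), (((t - 1) * (k - 4 * t + 2) * (k - 4 * t + 3) : ℤ) : ℚ)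
      + ∑ t ∈ Icc 0 (((k + 1) / 2 - 1) / 2), ((t * (k - 4 * t) * (k - 4 * t + 1) : ℤ) : ℚ)
      + 1/2 * ∑ a ∈ Icc 0 ((k - 3) / 4), (((k - 4 * a - 2) * (k - 4 * a - 1) : ℤ) : ℚ) := by
  rw [N21, sum_Icc_neg, neg_neg, neg_neg, sum_Icc_one_eq_sum_even_add_sum_odd]
  congr 2 <;> refine sum_congr rfl fun t _ => ?_
  · rw [show -(-(2 * t) + 1) / 2 = t - 1 by omega]
    push_cast
    ring
  · rw [show -(-(2 * t + 1) + 1) / 2 = t by omega]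
    push_cast
    ring

-- Discrete antiderivatives of the three summands of `N21_eq_sum_add_sum_add_sum`.
def n21EvenAntidiff (k x : ℚ) : ℚ :=
  (1/2)*k^2*x^2 - (1/2)*k^2*x - (8/3)*k*x^3 + (5/2)*k*x^2 + (1/6)*k*x
    + 4*x^4 - 4*x^3 - x^2 + x

def n21OddAntidiff (k x : ℚ) : ℚ :=
  (1/2)*k^2*x^2 + (1/2)*k^2*x - (8/3)*k*x^3 - (7/2)*k*x^2 - (5/6)*k*x
    + 4*x^4 + (20/3)*x^3 + 2*x^2 - (2/3)*x

def n21TailAntidiff (k x : ℚ) : ℚ :=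
  k^2*x - 4*k*x^2 - 7*k*x + (16/3)*x^3 + 14*x^2 + (32/3)*x

theorem N21_eq {k : ℤ} (hk : 0 ≤ k) :
    N21 k = n21EvenAntidiff k ((k + 1) / 2 / 2 : ℤ) - n21EvenAntidiff k 0
      + (n21OddAntidiff k (((k + 1) / 2 - 1) / 2 : ℤ) - n21OddAntidiff k (-1))
      + 1/2 * (n21TailAntidiff k ((k - 3) / 4 : ℤ) - n21TailAntidiff k (-1)) := by
  rw [N21_eq_sum_add_sum_add_sum,
    sum_Icc_telescope _ (fun t : ℤ => n21EvenAntidiff k t)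
      (fun x => by simp only [n21EvenAntidiff]; push_cast; ring) (by omega),
    sum_Icc_telescope _ (fun t : ℤ => n21OddAntidiff k t)
      (fun x => by simp only [n21OddAntidiff]; push_cast; ring) (by omega),
    sum_Icc_telescope _ (fun t : ℤ => n21TailAntidiff k t)
      (fun x => by simp only [n21TailAntidiff]; push_cast; ring) (by omega)]
  push_cast
  ring

theorem N21_of_even {k : ℤ} (hk : 0 ≤ k) (heven : Even k) :
    N21 k = 1/96 * k^4 + 1/48 * k^3 - 1/24 * k^2 - 1/12 * k := by
  rw [N21_eq hk]
  obtain ⟨q, rfl | rfl⟩ : ∃ q, k = 4 * q ∨ k = 4 * q + 2 :=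
    ⟨k / 4, by rcases heven with ⟨m, rfl⟩; omega⟩
  · rw [show (4 * q + 1) / 2 / 2 = q by omega, show ((4 * q + 1) / 2 - 1) / 2 = q - 1 by omega,
      show (4 * q - 3) / 4 = q - 1 by omega]
    simp only [n21EvenAntidiff, n21OddAntidiff, n21TailAntidiff]
    push_cast
    ring
  · rw [show (4 * q + 2 + 1) / 2 / 2 = q by omega, show ((4 * q + 2 + 1) / 2 - 1) / 2 = q by omega,
      show (4 * q + 2 - 3) / 4 = q - 1 by omega]
    simp only [n21EvenAntidiff, n21OddAntidiff, n21TailAntidiff]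
    push_cast
    ring

theorem N21_of_odd {k : ℤ} (hk : 0 ≤ k) (hodd : Odd k) :
    N21 k = 1/96 * k^4 + 1/48 * k^3 - 1/24 * k^2 - 1/48 * k + 1/32 := by
  rw [N21_eq hk]
  obtain ⟨q, rfl | rfl⟩ : ∃ q, k = 4 * q + 1 ∨ k = 4 * q + 3 :=
    ⟨k / 4, by rcases hodd with ⟨m, rfl⟩; omega⟩
  · rw [show (4 * q + 1 + 1) / 2 / 2 = q by omega, show ((4 * q + 1 + 1) / 2 - 1) / 2 = q by omega,
      show (4 * q + 1 - 3) / 4 = q - 1 by omega]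
    simp only [n21EvenAntidiff, n21OddAntidiff, n21TailAntidiff]
    push_cast
    ring
  · rw [show (4 * q + 3 + 1) / 2 / 2 = q + 1 by omega,
      show ((4 * q + 3 + 1) / 2 - 1) / 2 = q by omega, show (4 * q + 3 - 3) / 4 = q by omega]
    simp only [n21EvenAntidiff, n21OddAntidiff, n21TailAntidiff]
    push_cast
    ring

/-- the count of degree-3 stable equivariant sheaves
`N₃(k) = N_{(1,1,1)}(k) + N_{(2,1)}(k) + N_{(1,2)}(k)` with
`N_{(1,2)}(k) = N_{(2,1)}(k+1)` equals `k(k+1)²(k+2)/6`. -/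
theorem stmt2 (k : ℤ) (hk : 1 ≤ k) :
    (N111 k : ℚ) + N21 k + N21 (k+1) = ((k * (k+1)^2 * (k+2) : ℤ) : ℚ) / 6 := by
  have hk₀ : 0 ≤ k := by omega
  rcases Int.even_or_odd k with heven | hodd
  · rw [cast_N111_of_even hk₀ heven, N21_of_even hk₀ heven,
      N21_of_odd (by omega) heven.add_one]
    push_cast
    ring
  · rw [cast_N111_of_odd hk₀ hodd, N21_of_odd hk₀ hodd, N21_of_even (by omega) hodd.add_one]
    push_cast
    ring
end

section
/- For $k \ge 1$, the difference $N_{(1,1,1)}(k) - N_{(1,1,1)}(k-1)$ equals $\sum_{\lambda_1=k-1}^{\lfloor (3k-2)/2 \rfloor} (3k - 2\lambda_1 - 1)(\lambda_1+1) + \sum_{\lambda_0=1}^{\lfloor (k-1)/2 \rfloor} (\lambda_0 + k + 1)(k - 2\lambda_0)$. -/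
open Finset

noncomputable def admissibleTriples (k : ℤ) : Finset (ℤ × ℤ × ℤ) :=
  ((Icc (0:ℤ) (2*k-1)) ×ˢ (Icc (0:ℤ) (2*k-1)) ×ˢ (Icc (0:ℤ) (2*k-1))).filter
    (fun t => t.1 ≤ t.2.1 ∧ t.2.1 ≤ t.2.2 ∧ t.1 + t.2.1 + t.2.2 = 3*k-2)

def tripleWeight (t : ℤ × ℤ × ℤ) : ℤ := (t.2.2 - t.2.1 + 1) * (t.2.1 - t.1 + 1)

lemma N111_eq_sum_tripleWeight (k : ℤ) :
    N111 k = ∑ t ∈ admissibleTriples k, tripleWeight t := rfl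

lemma mem_admissibleTriples {k : ℤ} {t : ℤ × ℤ × ℤ} :
    t ∈ admissibleTriples k ↔ 0 ≤ t.1 ∧ t.1 ≤ t.2.1 ∧ t.2.1 ≤ t.2.2 ∧ t.2.2 ≤ 2*k-1 ∧
      t.1 + t.2.1 + t.2.2 = 3*k-2 := by
  simp only [admissibleTriples, mem_filter, mem_product, mem_Icc]
  omega

lemma tripleWeight_one_add (t : ℤ × ℤ × ℤ) : tripleWeight ((1, 1, 1) + t) = tripleWeight t := by
  simp only [tripleWeight, Prod.fst_add, Prod.snd_add]
  ring

lemma map_addLeft_admissibleTriples_sub_one (k : ℤ) :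
    (admissibleTriples (k-1)).map (Equiv.addLeft ((1, 1, 1) : ℤ × ℤ × ℤ)).toEmbedding =
      (admissibleTriples k).filter (fun t => 1 ≤ t.1 ∧ t.2.2 ≤ 2*k-2) := by
  ext t
  simp only [mem_map_equiv, Equiv.addLeft_symm, Equiv.coe_addLeft, mem_filter,
    mem_admissibleTriples, Prod.fst_add, Prod.snd_add, Prod.fst_neg, Prod.snd_neg]
  omega

lemma N111_sub_one_eq_sum_interior (k : ℤ) :
    N111 (k-1) = ∑ t ∈ (admissibleTriples k).filter (fun t => 1 ≤ t.1 ∧ t.2.2 ≤ 2*k-2),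
      tripleWeight t := by
  rw [N111_eq_sum_tripleWeight, ← map_addLeft_admissibleTriples_sub_one, sum_map]
  simp only [Equiv.coe_toEmbedding, Equiv.coe_addLeft, tripleWeight_one_add]

lemma filter_not_interior_admissibleTriples (k : ℤ) :
    (admissibleTriples k).filter (fun t => ¬(1 ≤ t.1 ∧ t.2.2 ≤ 2*k-2)) =
      (admissibleTriples k).filter (fun t => t.1 = 0) ∪
        (admissibleTriples k).filter (fun t => 1 ≤ t.1 ∧ t.2.2 = 2*k-1) := by
  ext t
  simp only [mem_union, mem_filter, mem_admissibleTriples]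
  omega

lemma sum_tripleWeight_filter_fst_eq_zero {k : ℤ} (hk : 1 ≤ k) :
    ∑ t ∈ (admissibleTriples k).filter (fun t => t.1 = 0), tripleWeight t =
      ∑ l ∈ Icc (k-1) ((3*k-2)/2), (3*k - 2*l - 1) * (l + 1) := by
  symm
  refine sum_nbij' (fun l => (0, l, 3*k-2-l)) (fun t => t.2.1) ?_ ?_ (fun _ _ => rfl) ?_ ?_
  · intro l hl
    simp only [mem_Icc, mem_filter, mem_admissibleTriples, and_true] at hl ⊢
    omega
  · intro t ht
    simp only [mem_Icc, mem_filter, mem_admissibleTriples] at ht ⊢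
    omega
  · rintro ⟨a, b, c⟩ ht
    simp only [mem_filter, mem_admissibleTriples] at ht
    simp only [Prod.mk.injEq, true_and]
    omega
  · intro l _
    simp only [tripleWeight]
    ring

lemma sum_tripleWeight_filter_snd_snd_eq_top (k : ℤ) :
    ∑ t ∈ (admissibleTriples k).filter (fun t => 1 ≤ t.1 ∧ t.2.2 = 2*k-1), tripleWeight t =
      ∑ l ∈ Icc (1 : ℤ) ((k-1)/2), (l + k + 1) * (k - 2*l) := by
  symm
  refine sum_nbij' (fun l => (l, k-1-l, 2*k-1)) (fun t => t.1) ?_ ?_ (fun _ _ => rfl) ?_ ?_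
  · intro l hl
    simp only [mem_Icc, mem_filter, mem_admissibleTriples, and_true] at hl ⊢
    omega
  · intro t ht
    simp only [mem_Icc, mem_filter, mem_admissibleTriples] at ht ⊢
    omega
  · rintro ⟨a, b, c⟩ ht
    simp only [mem_filter, mem_admissibleTriples] at ht
    simp only [Prod.mk.injEq, true_and]
    omega
  · intro l _
    simp only [tripleWeight]
    ring

/-- for `k ≥ 1`,
`N_{(1,1,1)}(k) - N_{(1,1,1)}(k-1)
  = ∑_{λ₁=k-1}^{⌊(3k-2)/2⌋} (3k-2λ₁-1)(λ₁+1)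
  + ∑_{λ₀=1}^{⌊(k-1)/2⌋} (λ₀+k+1)(k-2λ₀)`. -/
theorem stmt3 (k : ℤ) (hk : 1 ≤ k) :
    N111 k - N111 (k-1)
      = (∑ l ∈ Finset.Icc (k-1) ((3*k-2)/2), (3*k - 2*l - 1) * (l + 1)) +
        (∑ l ∈ Finset.Icc (1 : ℤ) ((k-1)/2), (l + k + 1) * (k - 2*l)) := by
  have hdisj : Disjoint ((admissibleTriples k).filter (fun t => t.1 = 0))
      ((admissibleTriples k).filter (fun t => 1 ≤ t.1 ∧ t.2.2 = 2*k-1)) :=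
    disjoint_filter.2 fun _ _ h₀ h₁ => by omega
  rw [N111_sub_one_eq_sum_interior, N111_eq_sum_tripleWeight,
    ← sum_filter_add_sum_filter_not _ (fun t => 1 ≤ t.1 ∧ t.2.2 ≤ 2*k-2),
    filter_not_interior_admissibleTriples, sum_union hdisj,
    sum_tripleWeight_filter_fst_eq_zero hk, sum_tripleWeight_filter_snd_snd_eq_top]
  ring
end

section
/- For $k \ge 1$, $N_{(2,1)}(k) = \sum_{(a_1,a_2,b) \in S_{(2,1)}(k)} f(b-a_1+k,\, b-a_2+k,\, 2b+k+1)$ equals $\sum_{b=\lceil -(k+1)/2 \rceil}^{-1} \lfloor -(b+1)/2 \rfloor (k+2b+2)(k+2b+3) + \tfrac{1}{2}\sum_{a=0}^{\lfloor (k-3)/4 \rfloor}(k-4a-2)(k-4a-1)$. -/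
/-- `f(n,m,r)`: the (half-)count of pairs of monomials of degrees `n, m` with
`deg gcd ≤ r`; equal to `(r+1)(r+2)` if `0 ≤ r < min n m` and `n ≠ m`, to
`(r+1)(r+2)/2` if `0 ≤ r < n = m`, and to `0` if `r < 0`. -/
noncomputable def fcount (n m r : ℤ) : ℚ :=
  if 0 ≤ r ∧ r < min n m then
    (if n = m then (((r+1) * (r+2) : ℤ) : ℚ) / 2 else (((r+1) * (r+2) : ℤ) : ℚ))
  else 0

/-!
With `b = -2 - a₁ - a₂`, the summand vanishes unless `2 (a₁ + a₂) ≤ k - 3`, and is then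
`(k - 2t)(k + 1 - 2t)` with `t = a₁ + a₂ + 1`, halved on the diagonal `a₁ = a₂`. The pairs
`a₁ ≥ a₂ ≥ 0` with `a₁ + a₂ = t - 1`, the diagonal one counted half, have total weight `t / 2`, so
`N_{(2,1)}(k) = ∑_{t=0}^{⌊(k-1)/2⌋} (t / 2)(k - 2t)(k + 1 - 2t)`. On the right-hand side, `t = -1 - b`
turns the first sum into the same sum with weight `⌊t / 2⌋`, and `t = 2a + 1` turns the second into
an extra `1 / 2` for odd `t`.
-/

open Finset

lemma fcount_of_le {n m : ℤ} (r : ℤ) (h : n ≤ m) :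
    fcount n m r =
      if 0 ≤ r ∧ r < n then (if n = m then 1 / 2 else 1) * (((r + 1) * (r + 2) : ℤ) : ℚ)
      else 0 := by
  rw [fcount, min_eq_left h]
  split_ifs <;> ring

lemma sum_Icc_ediv_two_half_at_midpoint {t : ℤ} (ht : 0 ≤ t) :
    ∑ j ∈ Icc 0 ((t - 1) / 2), (if 2 * j + 1 = t then (1 : ℚ) / 2 else 1) = t / 2 := by
  obtain ⟨u, rfl | rfl⟩ := Int.even_or_odd' t
  · have hu : ((u.toNat : ℤ) : ℚ) = u := by rw [Int.toNat_of_nonneg (by omega)]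
    rw [sum_congr rfl fun j _ => if_neg (by omega), sum_const, Int.card_Icc, nsmul_one,
      show (2 * u - 1) / 2 + 1 - 0 = u by omega]
    push_cast at hu ⊢
    rw [hu]; ring
  · have hu : ((u.toNat : ℤ) : ℚ) = u := by rw [Int.toNat_of_nonneg (by omega)]
    rw [show (2 * u + 1 - 1) / 2 = u by omega, ← add_sum_erase _ _ (mem_Icc.2 ⟨by omega, le_rfl⟩),
      if_pos rfl, sum_congr rfl fun j hj => if_neg (by rw [mem_erase, mem_Icc] at hj; omega), sum_const, nsmul_one,
      Icc_erase_right, Int.card_Ico, sub_zero]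
    push_cast at hu ⊢
    rw [hu]; ring

lemma sum_pairs_le_half_diag (n : ℤ) (G : ℤ → ℚ) :
    ∑ p ∈ (Icc 0 n ×ˢ Icc 0 n).filter (fun p => p.2 ≤ p.1 ∧ p.1 + p.2 < n),
      (if p.1 = p.2 then (1 : ℚ) / 2 else 1) * G (p.1 + p.2 + 1)
    = ∑ t ∈ Icc 0 n, (t : ℚ) / 2 * G t := by
  rw [← sum_fiberwise_of_maps_to (g := fun p => p.1 + p.2 + 1) (t := Icc 0 n)
    (fun p hp => by simp only [mem_filter, mem_product, mem_Icc] at hp ⊢; omega)]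
  refine sum_congr rfl fun t ht => ?_
  rw [mem_Icc] at ht
  calc _ = ∑ p ∈ (Icc 0 n ×ˢ Icc 0 n).filter (fun p => p.2 ≤ p.1 ∧ p.1 + p.2 < n)
          with p.1 + p.2 + 1 = t, (if p.1 = p.2 then (1 : ℚ) / 2 else 1) * G t :=
        sum_congr rfl fun p hp => by rw [(mem_filter.1 hp).2]
    _ = (∑ j ∈ Icc 0 ((t - 1) / 2), if 2 * j + 1 = t then (1 : ℚ) / 2 else 1) * G t := by
        rw [sum_mul]
        refine sum_nbij' (fun p => p.2) (fun j => (t - 1 - j, j)) ?_ ?_ ?_ (fun _ _ => rfl) ?_ <;>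
          simp only [mem_filter, mem_product, mem_Icc, Prod.ext_iff, and_true]
        · intro p hp; omega
        · intro j hj; omega
        · intro p hp; omega
        · intro p hp; rw [if_congr (show p.1 = p.2 ↔ 2 * p.2 + 1 = t by omega) rfl rfl]
    _ = t / 2 * G t := by rw [sum_Icc_ediv_two_half_at_midpoint ht.1]

lemma sum_fcount_eq_sum_half_mul (k : ℤ) :
    ∑ p ∈ (Icc 0 k ×ˢ Icc 0 k).filter
        (fun p => p.2 ≤ p.1 ∧ p.1 ≤ (-2 - p.1 - p.2) + k ∧ p.2 ≤ (-2 - p.1 - p.2) + k),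
      fcount ((-2 - p.1 - p.2) - p.1 + k) ((-2 - p.1 - p.2) - p.2 + k)
        (2 * (-2 - p.1 - p.2) + k + 1)
    = ∑ t ∈ Icc 0 ((k - 1) / 2), (t : ℚ) / 2 * (((k - 2 * t) * (k + 1 - 2 * t) : ℤ) : ℚ) := by
  refine Eq.trans ?_ (sum_pairs_le_half_diag _ fun t => ((k - 2 * t) * (k + 1 - 2 * t) : ℤ))
  symm
  refine sum_subset_zero_on_sdiff (fun p hp => ?_) (fun p hp => ?_) (fun p hp => ?_) <;>
    simp only [mem_sdiff, mem_filter, mem_product, mem_Icc] at hp ⊢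
  · omega
  · rw [fcount_of_le _ (by omega), if_neg (by omega)]
  · rw [fcount_of_le _ (by omega)]
    split_ifs <;> first | omega | (push_cast; ring)

lemma cast_ediv_two_add_ite_odd (t : ℤ) :
    ((t / 2 : ℤ) : ℚ) + (if t % 2 = 1 then 1 / 2 else 0) = t / 2 := by
  have h : (t : ℚ) = ((t % 2 : ℤ) : ℚ) + 2 * ((t / 2 : ℤ) : ℚ) := by
    exact_mod_cast (Int.emod_add_mul_ediv t 2).symm
  rcases Int.emod_two_eq_zero_or_one t with h2 | h2 <;> simp only [h2] at h ⊢ <;>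
    norm_num at h ⊢ <;> linarith

lemma sum_ediv_two_add_half_sum_eq_sum_half_mul (k : ℤ) :
    (∑ b ∈ Icc (-((k + 1) / 2)) (-1),
        ((((-(b + 1)) / 2) * (k + 2 * b + 2) * (k + 2 * b + 3) : ℤ) : ℚ)) +
      1 / 2 * ∑ a ∈ Icc 0 ((k - 3) / 4), (((k - 4 * a - 2) * (k - 4 * a - 1) : ℤ) : ℚ)
    = ∑ t ∈ Icc 0 ((k - 1) / 2), (t : ℚ) / 2 * (((k - 2 * t) * (k + 1 - 2 * t) : ℤ) : ℚ) := by
  set g : ℤ → ℚ := fun t => ((k - 2 * t) * (k + 1 - 2 * t) : ℤ)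
  have hfloor : ∑ b ∈ Icc (-((k + 1) / 2)) (-1),
      ((((-(b + 1)) / 2) * (k + 2 * b + 2) * (k + 2 * b + 3) : ℤ) : ℚ)
      = ∑ t ∈ Icc 0 ((k - 1) / 2), ((t / 2 : ℤ) : ℚ) * g t := by
    refine sum_nbij' (fun b => -1 - b) (fun t => -1 - t) ?_ ?_ ?_ ?_ ?_ <;>
      simp only [mem_Icc]
    · intro b hb; omega
    · intro t ht; omega
    · intro b _; ring
    · intro t _; ring
    · intro b _
      simp only [g, show -(b + 1) = -1 - b by ring]
      push_cast; ring
  have hodd : ∑ a ∈ Icc 0 ((k - 3) / 4), (((k - 4 * a - 2) * (k - 4 * a - 1) : ℤ) : ℚ)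
      = ∑ t ∈ Icc 0 ((k - 1) / 2), if t % 2 = 1 then g t else 0 := by
    rw [← sum_filter]
    refine sum_nbij' (fun a => 2 * a + 1) (fun t => t / 2) ?_ ?_ ?_ ?_ ?_ <;>
      simp only [mem_filter, mem_Icc]
    · intro a ha; omega
    · intro t ht; omega
    · intro a _; omega
    · intro t ht; omega
    · intro a _; simp only [g]; push_cast; ring
  rw [hfloor, hodd, mul_sum, ← sum_add_distrib]
  refine sum_congr rfl fun t _ => ?_
  rw [← cast_ediv_two_add_ite_odd t]
  split_ifs <;> ring

theorem stmt7_general (k : ℤ) :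
    (∑ p ∈ ((Finset.Icc (0:ℤ) k) ×ˢ (Finset.Icc (0:ℤ) k)).filter
        (fun p => p.2 ≤ p.1 ∧ p.1 ≤ (-2 - p.1 - p.2) + k ∧ p.2 ≤ (-2 - p.1 - p.2) + k),
      fcount ((-2 - p.1 - p.2) - p.1 + k) ((-2 - p.1 - p.2) - p.2 + k)
        (2 * (-2 - p.1 - p.2) + k + 1))
    = (∑ b ∈ Finset.Icc (-((k+1)/2)) (-1 : ℤ),
        ((((-(b+1))/2) * (k+2*b+2) * (k+2*b+3) : ℤ) : ℚ)) +
      (1/2) * ∑ a ∈ Finset.Icc (0 : ℤ) ((k-3)/4),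
        (((k-4*a-2) * (k-4*a-1) : ℤ) : ℚ) :=
  (sum_fcount_eq_sum_half_mul k).trans (sum_ediv_two_add_half_sum_eq_sum_half_mul k).symm

/-- For `k ≥ 1`,
`N_{(2,1)}(k) = ∑_{(a₁,a₂,b) ∈ S_{(2,1)}(k), a₁ ≥ a₂} f(b-a₁+k, b-a₂+k, 2b+k+1)`
equals
`∑_{b=⌈-(k+1)/2⌉}^{-1} ⌊-(b+1)/2⌋(k+2b+2)(k+2b+3) + ½∑_{a=0}^{⌊(k-3)/4⌋}(k-4a-2)(k-4a-1)`.
Here a triple `(a₁,a₂,b) ∈ S_{(2,1)}(k)` (with `a₁+a₂+b = -2`, `0 ≤ aᵢ ≤ b+k`,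
`a₁ ≥ a₂`) is parametrized by the pair `(a₁,a₂)`, with `b = -2-a₁-a₂`. -/
theorem stmt7 (k : ℤ) (hk : 1 ≤ k) :
    (∑ p ∈ ((Finset.Icc (0:ℤ) k) ×ˢ (Finset.Icc (0:ℤ) k)).filter
        (fun p => p.2 ≤ p.1 ∧ p.1 ≤ (-2 - p.1 - p.2) + k ∧ p.2 ≤ (-2 - p.1 - p.2) + k),
      fcount ((-2 - p.1 - p.2) - p.1 + k) ((-2 - p.1 - p.2) - p.2 + k)
        (2 * (-2 - p.1 - p.2) + k + 1))
    = (∑ b ∈ Finset.Icc (-((k+1)/2)) (-1 : ℤ),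
        ((((-(b+1))/2) * (k+2*b+2) * (k+2*b+3) : ℤ) : ℚ)) +
      (1/2) * ∑ a ∈ Finset.Icc (0 : ℤ) ((k-3)/4),
        (((k-4*a-2) * (k-4*a-1) : ℤ) : ℚ) :=
  stmt7_general k
end

section
/- Let $\alpha_1, \alpha_2$ be nonzero monomials in $x, y$ with $\deg \alpha_i = b - a_i + k$ for $i=1,2$. Then the kernel of the map $(\alpha_1, \alpha_2) : \mathcal{O}_{\mathbb{P}^1}(a_1) \oplus \mathcal{O}_{\mathbb{P}^1}(a_2) \to \mathcal{O}_{\mathbb{P}^1}(b+k)$ is a line bundle of degree $a_1 + a_2 - b - k + \deg(\gcd(\alpha_1, \alpha_2))$. -/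
/-!
Write `d = gcd(α₁, α₂)`, so that `αᵢ = d·βᵢ` with `β₁, β₂` monomials in disjoint sets of
variables. Since `d` is a non-zero-divisor, `α₁ f + α₂ g = 0` iff `β₁ f = -β₂ g`; comparing
coefficients, `β₂ ∣ f`, and then `(f, g) = t·(β₂, -β₁)`. So the kernel is free of rank one,
generated in degree `a₁ - deg β₂ = a₁ + a₂ - b - k + deg d`.
-/

open MvPolynomial

/-- The homogeneous coordinate ring `ℂ[x,y]` of `ℙ¹`. -/
noncomputable abbrev R2 : Type := MvPolynomial (Fin 2) ℂ

namespace MvPolynomial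

variable {σ R : Type*}

section CommSemiring

variable [CommSemiring R]

theorem monomial_one_dvd_of_coeff_eq_zero {q : σ →₀ ℕ} {f : MvPolynomial σ R}
    (h : ∀ s, ¬ q ≤ s → coeff s f = 0) : monomial q 1 ∣ f := by
  rw [monomial_one_dvd_iff_modMonomial_eq_zero]
  ext s
  by_cases hs : q ≤ s
  · rw [coeff_modMonomial_of_le _ hs, coeff_zero]
  · rw [coeff_modMonomial_of_not_le _ hs, h s hs, coeff_zero]

theorem monomial_one_dvd_of_mul_eq_mul {p q : σ →₀ ℕ} (hpq : Disjoint p q)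
    {f g : MvPolynomial σ R} (h : monomial p 1 * f = monomial q 1 * g) :
    monomial q 1 ∣ f := by
  refine monomial_one_dvd_of_coeff_eq_zero fun s hs => ?_
  obtain ⟨i, hi⟩ : ∃ i, s i < q i := by
    simpa [Finsupp.le_def] using hs
  have hpi : p i = 0 := by
    have := DFunLike.congr_fun (disjoint_iff.1 hpq) i
    simp only [Finsupp.inf_apply, bot_eq_zero, Finsupp.coe_zero, Pi.zero_apply] at this
    omega
  have hq : ¬ q ≤ p + s := fun hle => by
    have := hle i
    simp only [Finsupp.add_apply, hpi] at this
    omega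
  calc coeff s f = coeff (p + s) (monomial p 1 * f) := by rw [coeff_monomial_mul, one_mul]
    _ = 0 := by rw [h, coeff_monomial_mul', if_neg hq]

end CommSemiring

section CommRing

variable [CommRing R]

local notation "mul[" e "]" => LinearMap.mulLeft (MvPolynomial σ R) (monomial e (1 : R))

theorem ker_coprod_mulLeft_monomial_of_disjoint {p q : σ →₀ ℕ} (hpq : Disjoint p q) :
    LinearMap.ker (LinearMap.coprod mul[p] mul[q]) =
      LinearMap.range (mul[q].prod (LinearMap.mulLeft _ (-(monomial p (1 : R))))) := by
  ext ⟨f, g⟩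
  simp only [LinearMap.mem_ker, LinearMap.coprod_apply, LinearMap.mulLeft_apply,
    LinearMap.mem_range, LinearMap.prod_apply, Function.prod, Prod.mk.injEq]
  constructor
  · intro h
    have hpf : monomial p 1 * f = monomial q 1 * (-g) := by linear_combination h
    obtain ⟨t, rfl⟩ := monomial_one_dvd_of_mul_eq_mul hpq hpf
    rw [mul_left_comm, monomial_one_mul_cancel_left_iff] at hpf
    exact ⟨t, rfl, by linear_combination -hpf⟩
  · rintro ⟨t, rfl, rfl⟩
    ring

theorem ker_coprod_mulLeft_monomial_add (d p q : σ →₀ ℕ) :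
    LinearMap.ker (LinearMap.coprod mul[d + p] mul[d + q]) =
      LinearMap.ker (LinearMap.coprod mul[p] mul[q]) := by
  ext ⟨f, g⟩
  simp only [LinearMap.mem_ker, LinearMap.coprod_apply, LinearMap.mulLeft_apply]
  have hsplit (e : σ →₀ ℕ) : monomial (d + e) (1 : R) = monomial d 1 * monomial e 1 := by
    rw [monomial_mul, mul_one]
  rw [hsplit, hsplit, mul_assoc, mul_assoc, ← mul_add,
    isRegular_one.monomial.left.mul_left_eq_zero_iff]

theorem ker_coprod_mulLeft_monomial (e₁ e₂ : σ →₀ ℕ) :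
    LinearMap.ker (LinearMap.coprod mul[e₁] mul[e₂]) =
      LinearMap.range (mul[e₂ - e₁ ⊓ e₂].prod
        (LinearMap.mulLeft _ (-(monomial (e₁ - e₁ ⊓ e₂) (1 : R))))) := by
  have hdisj : Disjoint (e₁ - e₁ ⊓ e₂) (e₂ - e₁ ⊓ e₂) := by
    rw [disjoint_iff, bot_eq_zero]
    ext i
    simp only [Finsupp.inf_apply, Finsupp.tsub_apply, Finsupp.coe_zero, Pi.zero_apply]
    omega
  have hker := ker_coprod_mulLeft_monomial_add (R := R) (e₁ ⊓ e₂) (e₁ - e₁ ⊓ e₂) (e₂ - e₁ ⊓ e₂)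
  rw [add_tsub_cancel_of_le inf_le_left, add_tsub_cancel_of_le inf_le_right] at hker
  rw [hker, ker_coprod_mulLeft_monomial_of_disjoint hdisj]

end CommRing

end MvPolynomial

/-- Let `α₁, α₂` be nonzero monomials in `x, y` with
`deg αᵢ = b - aᵢ + k`.  Then the kernel of
`(α₁, α₂) : O(a₁) ⊕ O(a₂) → O(b+k)` is a line bundle of degree
`a₁ + a₂ - b - k + deg gcd(α₁, α₂)`.  On the level of graded
`ℂ[x,y]`-modules this says: the kernel of `(f,g) ↦ α₁ f + α₂ g` is freely
generated by a pair `(q, -p)` of monomials with `deg q = b - a₂ + k - r` and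
`deg p = b - a₁ + k - r` where `r = deg gcd(α₁, α₂)`, so that the kernel line
bundle has degree `a₁ - deg q = a₁ + a₂ - b - k + r`. -/
theorem stmt10 (k a₁ a₂ b : ℤ) (e₁ e₂ : Fin 2 →₀ ℕ)
    (hd1 : ((e₁ 0 + e₁ 1 : ℕ) : ℤ) = b - a₁ + k)
    (hd2 : ((e₂ 0 + e₂ 1 : ℕ) : ℤ) = b - a₂ + k) :
    ∃ q p : Fin 2 →₀ ℕ,
      ((q 0 + q 1 : ℕ) : ℤ)
          = b - a₂ + k - ((min (e₁ 0) (e₂ 0) + min (e₁ 1) (e₂ 1) : ℕ) : ℤ) ∧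
      ((p 0 + p 1 : ℕ) : ℤ)
          = b - a₁ + k - ((min (e₁ 0) (e₂ 0) + min (e₁ 1) (e₂ 1) : ℕ) : ℤ) ∧
      LinearMap.ker
          (LinearMap.coprod (LinearMap.mulLeft R2 (monomial e₁ (1 : ℂ)))
            (LinearMap.mulLeft R2 (monomial e₂ (1 : ℂ))))
        = LinearMap.range
            ((LinearMap.mulLeft R2 (monomial q (1 : ℂ))).prod
              (LinearMap.mulLeft R2 (-(monomial p (1 : ℂ))))) ∧
      a₁ - ((q 0 + q 1 : ℕ) : ℤ)
        = a₁ + a₂ - b - k + ((min (e₁ 0) (e₂ 0) + min (e₁ 1) (e₂ 1) : ℕ) : ℤ) := by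
  refine ⟨e₂ - e₁ ⊓ e₂, e₁ - e₁ ⊓ e₂, ?_, ?_, ker_coprod_mulLeft_monomial e₁ e₂, ?_⟩ <;>
    simp only [Finsupp.tsub_apply, Finsupp.inf_apply] <;> omega
end

section
/- For every integer $k \ge -1$ and $n \ge 1$, the map sending $(c; d_1,\ldots,d_n; \beta_1,\ldots,\beta_n)$ to $(a_1,\ldots,a_n; b; \alpha_1,\ldots,\alpha_n)$ with $a_j = -1 - d_j$, $b = -n - c$, $\alpha_j = \beta_j$ transforms the data satisfying the stability conditions for type $(1,n)$ with parameter $k$ bijectively onto the data satisfying the stability conditions for type $(n,1)$ with parameter $k+n-1$. -/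
/-- The degree of the gcd of two monomials given by exponent pairs. -/
def gcdDeg (u v : ℕ × ℕ) : ℤ := (min u.1 v.1 : ℤ) + (min u.2 v.2 : ℤ)

/-- Stability data for type `(1,n)` with parameter `k`: integers `c, d₁, …, dₙ` with
`(c+1) + ∑(dᵢ+1) = 1`, nonzero monomials `βᵢ` (encoded by their exponent pairs) of
degree `dᵢ - c + k`, with `dᵢ ≤ -1` and `deg gcd(βᵢ, βⱼ) ≤ dᵢ + dⱼ - c + k` for
`i ≠ j`. -/
def Stab1n (n : ℕ) (k : ℤ) (c : ℤ) (d : Fin n → ℤ) (β : Fin n → ℕ × ℕ) : Prop :=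
  ((c + 1) + ∑ i, (d i + 1) = 1) ∧
  (∀ i, ((β i).1 + (β i).2 : ℤ) = d i - c + k) ∧
  (∀ i, d i ≤ -1) ∧
  (∀ i j, i ≠ j → gcdDeg (β i) (β j) ≤ d i + d j - c + k)

/-- Stability data for type `(n,1)` with parameter `k'`: integers `a₁, …, aₙ, b` with
`∑(aᵢ+1) + (b+1) = 1`, nonzero monomials `αᵢ` of degree `b - aᵢ + k'`, with `aᵢ ≥ 0`
and `deg gcd(αᵢ, αⱼ) ≤ b - aᵢ - aⱼ + k' - 1` for `i ≠ j`. -/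
def Stabn1 (n : ℕ) (k' : ℤ) (a : Fin n → ℤ) (b : ℤ) (α : Fin n → ℕ × ℕ) : Prop :=
  ((∑ i, (a i + 1)) + (b + 1) = 1) ∧
  (∀ i, ((α i).1 + (α i).2 : ℤ) = b - a i + k') ∧
  (∀ i, 0 ≤ a i) ∧
  (∀ i j, i ≠ j → gcdDeg (α i) (α j) ≤ b - a i - a j + k' - 1)

/-- for every `k ≥ -1` and `n ≥ 1`, the map
`(c; d₁,…,dₙ; β₁,…,βₙ) ↦ (a₁,…,aₙ; b; α₁,…,αₙ)` with `aⱼ = -1-dⱼ`, `b = -n-c`,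
`αⱼ = βⱼ` carries the type `(1,n)` stability data with parameter `k` bijectively
onto the type `(n,1)` stability data with parameter `k+n-1`. -/
theorem stmt14 (n : ℕ) (hn : 1 ≤ n) (k : ℤ) (hk : -1 ≤ k)
    (c : ℤ) (d : Fin n → ℤ) (β : Fin n → ℕ × ℕ) :
    Stab1n n k c d β ↔
      Stabn1 n (k + n - 1) (fun i => -1 - d i) (-(n : ℤ) - c) β := by
  unfold Stab1n Stabn1
  have hsum : (∑ i : Fin n, (-1 - d i + 1)) = -∑ i : Fin n, d i := by
    rw [← Finset.sum_neg_distrib]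
    exact Finset.sum_congr rfl fun i _ => by ring
  have hsum2 : (∑ i : Fin n, (d i + 1)) = (∑ i : Fin n, d i) + n := by
    rw [Finset.sum_add_distrib]; simp
  constructor
  · rintro ⟨h1, h2, h3, h4⟩
    refine ⟨?_, fun i => by dsimp only; push_cast; linarith [h2 i], fun i => by dsimp only; linarith [h3 i],
      fun i j hij => by have := h4 i j hij; dsimp only; push_cast; linarith⟩
    rw [hsum]; push_cast; rw [hsum2] at h1; linarith
  · rintro ⟨h1, h2, h3, h4⟩
    rw [hsum] at h1
    refine ⟨?_, fun i => by have := h2 i; dsimp only at this; push_cast at this; linarith,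
      fun i => by have := h3 i; dsimp only at this; linarith,
      fun i j hij => by have := h4 i j hij; dsimp only at this; push_cast at this; linarith⟩
    rw [hsum2]; push_cast at h1; linarith
end
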